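/- Let G be a graph obtained by identifying one vertex of each of two odd cycles (a bouquet of two non-bipartite cycles at a common vertex x). Then dim_l(G) = 2. -/

import Mathlib

open SimpleGraph

/-- A set `S` is a local metric generator for `G` if every pair of adjacent
vertices is distinguished, by distance, by some element of `S`. -/
def IsLocalMetricGenerator {V : Type*} (G : SimpleGraph V) (S : Set V) : Prop :=
  ∀ ⦃u v : V⦄, G.Adj u v → ∃ w ∈ S, G.dist u w ≠ G.dist v w

/-- The local metric dimension of a graph. -/
noncomputable def localMetricDim {V : Type*} [Fintype V] (G : SimpleGraph V) : ℕ :=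
  sInf {k | ∃ S : Finset V, IsLocalMetricGenerator G ↑S ∧ S.card = k}

/-- A local metric basis: a local metric generator of minimum cardinality. -/
def IsLocalMetricBasis {V : Type*} [Fintype V] (G : SimpleGraph V) (S : Finset V) : Prop :=
  IsLocalMetricGenerator G ↑S ∧ S.card = localMetricDim G

/-- The one-point union (bouquet) of G₁ and G₂, identifying x₁ ∈ V(G₁) with
x₂ ∈ V(G₂); the vertex Sum.inl x₁ plays the role of the identified vertex. -/
def onePointUnion {V W : Type*} (G₁ : SimpleGraph V) (G₂ : SimpleGraph W)
    (x₁ : V) (x₂ : W) : SimpleGraph (V ⊕ {b : W // b ≠ x₂}) :=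
  SimpleGraph.fromRel (fun a b => match a, b with
    | .inl u, .inl w => G₁.Adj u w
    | .inr u, .inr w => G₂.Adj u.1 w.1
    | .inl u, .inr w => u = x₁ ∧ G₂.Adj x₂ w.1
    | .inr _, .inl _ => False)

/-!
Distances in the bouquet split at the cut vertex: if `r₁, r₂` retract the bouquet onto its two
pieces, then `d(a, b) = d₁(r₁ a, r₁ b) + d₂(r₂ a, r₂ b)`. In the cycle on `Fin N`, the edge
`{u, u + 1}` is equidistant from `w` iff `2 (u - w) + 1 = N`; hence no edge is equidistant from
both `w` and `w + 1`, while in an odd cycle every vertex has an equidistant opposite edge.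
So `{x₁ + 1, x₂ + 1}` resolves the bouquet: an edge of one cycle that only the cut vertex
resolves is resolved by the chosen vertex of the other cycle, whose distances pass through the
cut vertex. Conversely, for the same reason a vertex of one cycle cannot resolve the edge
opposite to the cut vertex in the other cycle, so every resolving set meets both cycles.
-/

open Fin.CommRing

section LocalMetricDim

variable {V : Type*} {G : SimpleGraph V}

lemma isLocalMetricGenerator_univ (G : SimpleGraph V) : IsLocalMetricGenerator G Set.univ :=
  fun u _ h ↦ ⟨u, trivial, by rw [dist_self, dist_eq_one_iff_adj.mpr h.symm]; decide⟩

variable [Fintype V]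

lemma localMetricDim_le {S : Finset V} (hS : IsLocalMetricGenerator G S) :
    localMetricDim G ≤ S.card :=
  Nat.sInf_le ⟨S, hS, rfl⟩

lemma le_localMetricDim {k : ℕ}
    (h : ∀ S : Finset V, IsLocalMetricGenerator G S → k ≤ S.card) : k ≤ localMetricDim G :=
  le_csInf ⟨_, Finset.univ, by simpa using isLocalMetricGenerator_univ G, rfl⟩
    (by rintro _ ⟨S, hS, rfl⟩; exact h S hS)

end LocalMetricDim

namespace Fin

variable {n : ℕ}

def cyclicNorm (a : Fin (n + 1)) : ℕ := min a.val (-a).val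

lemma cyclicNorm_eq (a : Fin (n + 1)) : a.cyclicNorm = min a.val (n + 1 - a.val) := by
  rw [cyclicNorm, Fin.val_neg]
  split_ifs with h <;> simp [h]

@[simp] lemma cyclicNorm_zero : (0 : Fin (n + 1)).cyclicNorm = 0 := by
  simp [cyclicNorm]

lemma cyclicNorm_neg (a : Fin (n + 1)) : (-a).cyclicNorm = a.cyclicNorm := by
  rw [cyclicNorm, cyclicNorm, neg_neg, min_comm]

lemma cyclicNorm_add_one_le (a : Fin (n + 1)) : (a + 1).cyclicNorm ≤ a.cyclicNorm + 1 := by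
  rw [cyclicNorm_eq, cyclicNorm_eq, Fin.val_add_one]
  split_ifs <;> omega

lemma cyclicNorm_sub_one_le (a : Fin (n + 1)) : (a - 1).cyclicNorm ≤ a.cyclicNorm + 1 := by
  rw [← cyclicNorm_neg (a - 1), neg_sub, sub_eq_neg_add, ← cyclicNorm_neg a]
  exact cyclicNorm_add_one_le (-a)

lemma cyclicNorm_add_one_eq_iff (a : Fin (n + 1)) :
    (a + 1).cyclicNorm = a.cyclicNorm ↔ 2 * a.val + 1 = n + 1 := by
  rw [cyclicNorm_eq, cyclicNorm_eq, Fin.val_add_one]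
  split_ifs with h
  · have : a.val = n := by simp [h]
    omega
  · omega

end Fin

namespace SimpleGraph

lemma Reachable.dist_map_le {V V' : Type*} {G : SimpleGraph V} {G' : SimpleGraph V'}
    (f : G →g G') {a b : V} (h : G.Reachable a b) : G'.dist (f a) (f b) ≤ G.dist a b := by
  obtain ⟨p, hp⟩ := h.exists_walk_length_eq_dist
  calc G'.dist (f a) (f b) ≤ (p.map f).length := dist_le _
    _ = G.dist a b := by rw [Walk.length_map, hp]

lemma Adj.dist_le_dist_add_one {V : Type*} {G : SimpleGraph V} {u v : V} (h : G.Adj u v)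
    (w : V) : G.dist u w ≤ G.dist v w + 1 := by
  have := h.reachable.dist_triangle_left w
  rw [dist_eq_one_iff_adj.mpr h] at this
  omega

variable {n : ℕ}

lemma cycleGraph_dist_add_natCast_le (i : Fin (n + 2)) (k : ℕ) :
    (cycleGraph (n + 2)).dist i (i + k) ≤ k := by
  induction k with
  | zero => simp
  | succ k ih =>
    have hadj : (cycleGraph (n + 2)).Adj (i + (k + 1 : ℕ)) (i + k) := by
      rw [cycleGraph_adj]; left; push_cast; ring
    rw [dist_comm] at ih ⊢
    exact (hadj.dist_le_dist_add_one i).trans (by omega)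

lemma cyclicNorm_sub_le_length {i j : Fin (n + 2)} (p : (cycleGraph (n + 2)).Walk i j) :
    (i - j).cyclicNorm ≤ p.length := by
  induction p with
  | nil => simp
  | @cons a b c h q ih =>
    rw [Walk.length_cons]
    rcases cycleGraph_adj.mp h with h | h
    · have := (b - c).cyclicNorm_add_one_le
      rw [show b - c + 1 = a - c by rw [← h]; ring] at this
      omega
    · have := (b - c).cyclicNorm_sub_one_le
      rw [show b - c - 1 = a - c by rw [← h]; ring] at this
      omega

theorem cycleGraph_dist (i j : Fin (n + 2)) :
    (cycleGraph (n + 2)).dist i j = (i - j).cyclicNorm := by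
  refine le_antisymm (le_min ?_ ?_) ?_
  · simpa [dist_comm] using cycleGraph_dist_add_natCast_le j (i - j).val
  · simpa using cycleGraph_dist_add_natCast_le i (-(i - j)).val
  · obtain ⟨p, hp⟩ := cycleGraph_connected.exists_walk_length_eq_dist i j
    exact hp ▸ cyclicNorm_sub_le_length p

/-- The equidistant edges are the ones opposite to `w`; they exist only in odd cycles. -/
theorem cycleGraph_dist_eq_dist_add_one_iff (u w : Fin (n + 2)) :
    (cycleGraph (n + 2)).dist u w = (cycleGraph (n + 2)).dist (u + 1) w ↔
      2 * (u - w).val + 1 = n + 2 := by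
  rw [cycleGraph_dist, cycleGraph_dist, show u + 1 - w = u - w + 1 by ring, eq_comm,
    Fin.cyclicNorm_add_one_eq_iff]

theorem isLocalMetricGenerator_cycleGraph_pair (w : Fin (n + 2)) :
    IsLocalMetricGenerator (cycleGraph (n + 2)) {w, w + 1} := by
  have key : ∀ u, ∃ s ∈ ({w, w + 1} : Set (Fin (n + 2))),
      (cycleGraph (n + 2)).dist u s ≠ (cycleGraph (n + 2)).dist (u + 1) s := by
    intro u
    by_contra! h
    have hw := (cycleGraph_dist_eq_dist_add_one_iff u w).mp (h w (by simp))
    have hw₁ := (cycleGraph_dist_eq_dist_add_one_iff u (w + 1)).mp (h (w + 1) (by simp))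
    have : u - w = u - (w + 1) := Fin.ext (by omega)
    simp at this
  intro u v huv
  rcases cycleGraph_adj.mp huv with h | h
  · obtain ⟨s, hs, hne⟩ := key v
    exact ⟨s, hs, by rwa [← h, add_sub_cancel, ne_comm] at hne⟩
  · obtain ⟨s, hs, hne⟩ := key u
    exact ⟨s, hs, by rwa [← h, add_sub_cancel] at hne⟩

theorem exists_adj_dist_eq_cycleGraph_of_odd {k : ℕ} (w : Fin (2 * k + 3)) :
    ∃ u v, (cycleGraph (2 * k + 3)).Adj u v ∧ u ≠ w ∧ v ≠ w ∧
      (cycleGraph (2 * k + 3)).dist u w = (cycleGraph (2 * k + 3)).dist v w := by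
  have hval : ∀ j < 2 * k + 3, ((j : Fin (2 * k + 3)) : ℕ) = j :=
    fun j hj ↦ Fin.val_cast_of_lt hj
  refine ⟨w + (k + 1 : ℕ), w + (k + 1 : ℕ) + 1, ?_, ?_, ?_, ?_⟩
  · rw [cycleGraph_adj]; right; ring
  · rw [Ne, add_eq_left, Fin.ext_iff, hval (k + 1) (by omega)]
    simp
  · rw [Ne, add_assoc, show ((k + 1 : ℕ) : Fin (2 * k + 3)) + 1 = (k + 2 : ℕ) by
      push_cast; ring, add_eq_left, Fin.ext_iff, hval (k + 2) (by omega)]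
    simp
  · rw [cycleGraph_dist_eq_dist_add_one_iff, add_sub_cancel_left, hval (k + 1) (by omega)]
    ring

end SimpleGraph

section OnePointUnion

variable {V W : Type*} {G₁ : SimpleGraph V} {G₂ : SimpleGraph W} {x₁ : V} {x₂ : W}

@[simp] lemma onePointUnion_adj_inl_inl {u v : V} :
    (onePointUnion G₁ G₂ x₁ x₂).Adj (.inl u) (.inl v) ↔ G₁.Adj u v := by
  simp only [onePointUnion, fromRel_adj, ne_eq, Sum.inl.injEq]
  exact ⟨fun ⟨_, h⟩ ↦ h.elim id Adj.symm, fun h ↦ ⟨h.ne, .inl h⟩⟩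

@[simp] lemma onePointUnion_adj_inr_inr {u v : {b : W // b ≠ x₂}} :
    (onePointUnion G₁ G₂ x₁ x₂).Adj (.inr u) (.inr v) ↔ G₂.Adj u.1 v.1 := by
  simp only [onePointUnion, fromRel_adj, ne_eq, Sum.inr.injEq]
  exact ⟨fun ⟨_, h⟩ ↦ h.elim id Adj.symm,
    fun h ↦ ⟨fun huv ↦ h.ne (congrArg _ huv), .inl h⟩⟩

@[simp] lemma onePointUnion_adj_inl_inr {u : V} {v : {b : W // b ≠ x₂}} :
    (onePointUnion G₁ G₂ x₁ x₂).Adj (.inl u) (.inr v) ↔ u = x₁ ∧ G₂.Adj x₂ v.1 := by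
  simp [onePointUnion]

@[simp] lemma onePointUnion_adj_inr_inl {u : V} {v : {b : W // b ≠ x₂}} :
    (onePointUnion G₁ G₂ x₁ x₂).Adj (.inr v) (.inl u) ↔ u = x₁ ∧ G₂.Adj x₂ v.1 := by
  rw [adj_comm, onePointUnion_adj_inl_inr]

namespace onePointUnion

variable (G₂ x₁ x₂) in
def inlHom : G₁ →g onePointUnion G₁ G₂ x₁ x₂ where
  toFun := .inl
  map_rel' := onePointUnion_adj_inl_inl.mpr

variable (G₁ x₁ x₂) in
def inrHom [DecidableEq W] : G₂ →g onePointUnion G₁ G₂ x₁ x₂ where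
  toFun y := if h : y = x₂ then .inl x₁ else .inr ⟨y, h⟩
  map_rel' {a b} h := by
    by_cases ha : a = x₂ <;> by_cases hb : b = x₂ <;> subst_vars
    · exact absurd h G₂.irrefl
    all_goals simp_all [h.symm]

variable (x₁) in
def retract₁ : V ⊕ {b : W // b ≠ x₂} → V := Sum.elim id fun _ ↦ x₁

def retract₂ : V ⊕ {b : W // b ≠ x₂} → W := Sum.elim (fun _ ↦ x₂) Subtype.val

lemma adj_retract {a b : V ⊕ {b : W // b ≠ x₂}} (h : (onePointUnion G₁ G₂ x₁ x₂).Adj a b) :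
    G₁.Adj (retract₁ x₁ a) (retract₁ x₁ b) ∧ retract₂ a = retract₂ b ∨
      retract₁ x₁ a = retract₁ x₁ b ∧ G₂.Adj (retract₂ a) (retract₂ b) := by
  rcases a with u | u <;> rcases b with v | v <;> simp_all [retract₁, retract₂]
  exact h.2.symm

lemma dist_retract_add_dist_retract_le_length {a b : V ⊕ {b : W // b ≠ x₂}}
    (p : (onePointUnion G₁ G₂ x₁ x₂).Walk a b) :
    G₁.dist (retract₁ x₁ a) (retract₁ x₁ b) + G₂.dist (retract₂ a) (retract₂ b) ≤
      p.length := by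
  induction p with
  | nil => simp
  | @cons a c b h q ih =>
    rw [Walk.length_cons]
    rcases adj_retract h with ⟨h₁, h₂⟩ | ⟨h₁, h₂⟩
    · have := h₁.dist_le_dist_add_one (retract₁ x₁ b)
      rw [h₂]
      omega
    · have := h₂.dist_le_dist_add_one (retract₂ b)
      rw [h₁]
      omega

lemma reachable_inl (h₁ : G₁.Connected) (h₂ : G₂.Connected)
    (a : V ⊕ {b : W // b ≠ x₂}) :
    (onePointUnion G₁ G₂ x₁ x₂).Reachable (.inl x₁) a := by
  classical
  rcases a with u | w
  · exact (h₁ x₁ u).map (inlHom G₂ x₁ x₂)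
  · simpa [inrHom, w.2] using (h₂ x₂ w).map (inrHom G₁ x₁ x₂)

lemma dist_retract_add_dist_retract_le (h₁ : G₁.Connected) (h₂ : G₂.Connected)
    (a b : V ⊕ {b : W // b ≠ x₂}) :
    G₁.dist (retract₁ x₁ a) (retract₁ x₁ b) + G₂.dist (retract₂ a) (retract₂ b) ≤
      (onePointUnion G₁ G₂ x₁ x₂).dist a b := by
  obtain ⟨p, hp⟩ :=
    ((reachable_inl h₁ h₂ a).symm.trans (reachable_inl h₁ h₂ b)).exists_walk_length_eq_dist
  exact hp ▸ dist_retract_add_dist_retract_le_length p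

end onePointUnion

open onePointUnion

lemma onePointUnion_dist_inl_inl (h₁ : G₁.Connected) (h₂ : G₂.Connected) (u v : V) :
    (onePointUnion G₁ G₂ x₁ x₂).dist (.inl u) (.inl v) = G₁.dist u v :=
  le_antisymm ((h₁ u v).dist_map_le (inlHom G₂ x₁ x₂))
    (by simpa [retract₁, retract₂] using
      dist_retract_add_dist_retract_le h₁ h₂ (.inl u) (.inl v))

lemma onePointUnion_dist_inr_inr (h₁ : G₁.Connected) (h₂ : G₂.Connected)
    (u v : {b : W // b ≠ x₂}) :
    (onePointUnion G₁ G₂ x₁ x₂).dist (.inr u) (.inr v) = G₂.dist u.1 v.1 := by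
  classical
  refine le_antisymm ?_ ?_
  · simpa [inrHom, u.2, v.2] using (h₂ u v).dist_map_le (inrHom G₁ x₁ x₂)
  · simpa [retract₁, retract₂] using dist_retract_add_dist_retract_le h₁ h₂ (.inr u) (.inr v)

lemma onePointUnion_dist_inl_inr (h₁ : G₁.Connected) (h₂ : G₂.Connected) (u : V)
    (w : {b : W // b ≠ x₂}) :
    (onePointUnion G₁ G₂ x₁ x₂).dist (.inl u) (.inr w) = G₁.dist u x₁ + G₂.dist x₂ w.1 := by
  classical
  refine le_antisymm ?_ ?_
  · calc (onePointUnion G₁ G₂ x₁ x₂).dist (.inl u) (.inr w)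
        ≤ (onePointUnion G₁ G₂ x₁ x₂).dist (.inl u) (.inl x₁) +
            (onePointUnion G₁ G₂ x₁ x₂).dist (inrHom G₁ x₁ x₂ x₂) (inrHom G₁ x₁ x₂ w) := by
          simpa [inrHom, w.2] using (reachable_inl h₁ h₂ (.inl u)).symm.dist_triangle_left _
      _ ≤ G₁.dist u x₁ + G₂.dist x₂ w.1 := by
          rw [onePointUnion_dist_inl_inl h₁ h₂]
          exact Nat.add_le_add_left ((h₂ x₂ w).dist_map_le _) _
  · simpa [retract₁, retract₂] using dist_retract_add_dist_retract_le h₁ h₂ (.inl u) (.inr w)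

lemma onePointUnion_dist_inr_inl (h₁ : G₁.Connected) (h₂ : G₂.Connected) (u : V)
    (w : {b : W // b ≠ x₂}) :
    (onePointUnion G₁ G₂ x₁ x₂).dist (.inr w) (.inl u) = G₁.dist u x₁ + G₂.dist x₂ w.1 := by
  rw [dist_comm, onePointUnion_dist_inl_inr h₁ h₂]

theorem isLocalMetricGenerator_onePointUnion_pair (h₁ : G₁.Connected) (h₂ : G₂.Connected)
    {a₁ : V} {a₂ : {b : W // b ≠ x₂}} (hS₁ : IsLocalMetricGenerator G₁ {x₁, a₁})
    (hS₂ : IsLocalMetricGenerator G₂ {x₂, a₂.1}) :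
    IsLocalMetricGenerator (onePointUnion G₁ G₂ x₁ x₂) {.inl a₁, .inr a₂} := by
  have hx₂ : ∀ w : {b : W // b ≠ x₂}, G₂.dist x₂ w.1 ≠ 0 := fun w ↦
    (h₂.pos_dist_of_ne (Ne.symm w.2)).ne'
  rintro (u | u) (v | v) huv
  · obtain ⟨s, hs, hne⟩ := hS₁ (onePointUnion_adj_inl_inl.mp huv)
    rcases hs with rfl | rfl
    · refine ⟨.inr a₂, by simp, ?_⟩
      rw [onePointUnion_dist_inl_inr h₁ h₂, onePointUnion_dist_inl_inr h₁ h₂]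
      omega
    · exact ⟨.inl s, by simp, by rwa [onePointUnion_dist_inl_inl h₁ h₂,
        onePointUnion_dist_inl_inl h₁ h₂]⟩
  · obtain ⟨rfl, -⟩ := onePointUnion_adj_inl_inr.mp huv
    refine ⟨.inl a₁, by simp, ?_⟩
    rw [onePointUnion_dist_inl_inl h₁ h₂, onePointUnion_dist_inr_inl h₁ h₂, dist_comm]
    exact (Nat.lt_add_of_pos_right (Nat.pos_of_ne_zero (hx₂ v))).ne
  · obtain ⟨rfl, -⟩ := onePointUnion_adj_inr_inl.mp huv
    refine ⟨.inl a₁, by simp, ?_⟩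
    rw [onePointUnion_dist_inl_inl h₁ h₂, onePointUnion_dist_inr_inl h₁ h₂, dist_comm]
    exact (Nat.lt_add_of_pos_right (Nat.pos_of_ne_zero (hx₂ u))).ne'
  · obtain ⟨s, hs, hne⟩ := hS₂ (onePointUnion_adj_inr_inr.mp huv)
    rcases hs with rfl | rfl
    · refine ⟨.inl a₁, by simp, ?_⟩
      rw [onePointUnion_dist_inr_inl h₁ h₂, onePointUnion_dist_inr_inl h₁ h₂,
        dist_comm (u := s), dist_comm (u := s)]
      omega
    · exact ⟨.inr a₂, by simp, by rwa [onePointUnion_dist_inr_inr h₁ h₂,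
        onePointUnion_dist_inr_inr h₁ h₂]⟩

/-- A vertex of the second graph sees an edge `uv` of the first only through `x₁`. -/
lemma exists_inl_mem_of_isLocalMetricGenerator_onePointUnion (h₁ : G₁.Connected)
    (h₂ : G₂.Connected) {S : Set (V ⊕ {b : W // b ≠ x₂})}
    (hS : IsLocalMetricGenerator (onePointUnion G₁ G₂ x₁ x₂) S) {u v : V} (huv : G₁.Adj u v)
    (hx₁ : G₁.dist u x₁ = G₁.dist v x₁) : ∃ a, .inl a ∈ S := by
  obtain ⟨a | w, hw, hne⟩ := hS (onePointUnion_adj_inl_inl.mpr huv)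
  · exact ⟨a, hw⟩
  · rw [onePointUnion_dist_inl_inr h₁ h₂, onePointUnion_dist_inl_inr h₁ h₂, hx₁] at hne
    exact absurd rfl hne

lemma exists_inr_mem_of_isLocalMetricGenerator_onePointUnion (h₁ : G₁.Connected)
    (h₂ : G₂.Connected) {S : Set (V ⊕ {b : W // b ≠ x₂})}
    (hS : IsLocalMetricGenerator (onePointUnion G₁ G₂ x₁ x₂) S) {u v : {b : W // b ≠ x₂}}
    (huv : G₂.Adj u.1 v.1) (hx₂ : G₂.dist u.1 x₂ = G₂.dist v.1 x₂) : ∃ b, .inr b ∈ S := by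
  obtain ⟨a | w, hw, hne⟩ := hS (onePointUnion_adj_inr_inr.mpr huv)
  · rw [onePointUnion_dist_inr_inl h₁ h₂, onePointUnion_dist_inr_inl h₁ h₂,
      dist_comm (u := x₂), hx₂, dist_comm (v := x₂)] at hne
    exact absurd rfl hne
  · exact ⟨w, hw⟩

end OnePointUnion

/-- The bouquet of two odd cycles at a common vertex has local metric
dimension 2. -/
theorem localMetricDim_bouquet_two_odd_cycles (m n : ℕ) (hm : 3 ≤ m) (hn : 3 ≤ n)
    (hmo : Odd m) (hno : Odd n) (x₁ : Fin m) (x₂ : Fin n) :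
    localMetricDim
      (onePointUnion (SimpleGraph.cycleGraph m) (SimpleGraph.cycleGraph n) x₁ x₂) = 2 := by
  obtain ⟨K, rfl⟩ : ∃ K, m = 2 * K + 3 := by obtain ⟨r, hr⟩ := hmo; exact ⟨r - 1, by omega⟩
  obtain ⟨L, rfl⟩ : ∃ L, n = 2 * L + 3 := by obtain ⟨r, hr⟩ := hno; exact ⟨r - 1, by omega⟩
  have h₁ : (cycleGraph (2 * K + 3)).Connected := cycleGraph_connected
  have h₂ : (cycleGraph (2 * L + 3)).Connected := cycleGraph_connected
  apply le_antisymm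
  · let a₂ : {b : Fin (2 * L + 3) // b ≠ x₂} := ⟨x₂ + 1, by simp⟩
    have hS := isLocalMetricGenerator_onePointUnion_pair h₁ h₂ (a₂ := a₂)
      (isLocalMetricGenerator_cycleGraph_pair x₁) (isLocalMetricGenerator_cycleGraph_pair x₂)
    rw [← Finset.coe_pair] at hS
    exact (localMetricDim_le hS).trans Finset.card_le_two
  · refine le_localMetricDim fun S hS ↦ ?_
    obtain ⟨u, v, huv, -, -, huv₁⟩ := exists_adj_dist_eq_cycleGraph_of_odd x₁
    obtain ⟨u', v', huv', hu', hv', huv₂⟩ := exists_adj_dist_eq_cycleGraph_of_odd x₂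
    obtain ⟨a, ha⟩ :=
      exists_inl_mem_of_isLocalMetricGenerator_onePointUnion h₁ h₂ hS huv huv₁
    obtain ⟨b, hb⟩ := exists_inr_mem_of_isLocalMetricGenerator_onePointUnion h₁ h₂ hS
      (u := ⟨u', hu'⟩) (v := ⟨v', hv'⟩) huv' huv₂
    exact Finset.one_lt_card.mpr ⟨_, ha, _, hb, Sum.inl_ne_inr⟩
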